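/- arXiv:1101.2116 — 5 statements merged into one kernel-verified Lean document; each statement's English description precedes it below -/
import Mathlib

section
/- Let (K,ν) be a real closed valued field and L = K(x₁,…,xₙ). For every point b ∈ Kⁿ there exists an OVF-valuation on L which is near b. -/
universe u v w

open MvPolynomial

/-- A (linear) field ordering, given by its cone of non-negative elements.
This is equivalent to a linear order making the field an ordered field. -/
structure FieldOrdering (L : Type*) [Field L] where
  P : Set L
  add_mem : ∀ x ∈ P, ∀ y ∈ P, x + y ∈ P
  mul_mem : ∀ x ∈ P, ∀ y ∈ P, x * y ∈ P
  square_mem : ∀ x : L, x * x ∈ P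
  neg_one_not_mem : (-1 : L) ∉ P
  total : ∀ x : L, x ∈ P ∨ -x ∈ P

/-- `x >_L 0` for a field ordering. -/
def FieldOrdering.Pos {L : Type*} [Field L] (O : FieldOrdering L) (x : L) : Prop :=
  x ∈ O.P ∧ x ≠ 0

/-- An ordering on a valued field is compatible with the (multiplicative) valuation
if `0 < x < y` implies `w x ≤ w y` (i.e. the additive valuation of `x` is at least
that of `y`); equivalently, the valuation ring is convex. -/
def FieldOrdering.IsCompatible {L : Type*} [Field L] {Γ : Type*}
    [LinearOrderedCommGroupWithZero Γ] (O : FieldOrdering L) (w : Valuation L Γ) : Prop :=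
  ∀ x y : L, O.Pos x → O.Pos (y - x) → w x ≤ w y

/-- A field `K` is real closed: every nonnegative element is a square and every
polynomial of odd degree has a root. -/
def IsRealClosedField (K : Type*) [Field K] [LinearOrder K] [IsStrictOrderedRing K] : Prop :=
  (∀ x : K, 0 ≤ x → ∃ y : K, y * y = x) ∧
    ∀ p : Polynomial K, Odd p.natDegree → ∃ x : K, p.IsRoot x

/-- `(K, ≤, ν)` is a real closed valued field: `K` is real closed and the
valuation ring of `ν` is convex (`0 < x < y → ν x ≤ ν y` multiplicatively). -/
def IsRCVF {K : Type*} [Field K] [LinearOrder K] [IsStrictOrderedRing K] {Γ₀ : Type*}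
    [LinearOrderedCommGroupWithZero Γ₀] (ν : Valuation K Γ₀) : Prop :=
  IsRealClosedField K ∧ ∀ x y : K, 0 < x → x < y → ν x ≤ ν y

/-- The field of rational functions in `n` variables over `K`. -/
abbrev RatFuncField (K : Type u) [Field K] (n : ℕ) : Type u :=
  FractionRing (MvPolynomial (Fin n) K)

/-- `f = q/r` with `r b ≠ 0` and `v = q b / r b`; i.e. `f` is defined at `b` with value `v`. -/
def HasEvalAt {K : Type u} [Field K] {n : ℕ} (f : RatFuncField K n) (b : Fin n → K) (v : K) :
    Prop :=
  ∃ q r : MvPolynomial (Fin n) K, eval b r ≠ 0 ∧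
    f = algebraMap (MvPolynomial (Fin n) K) (RatFuncField K n) q /
      algebraMap (MvPolynomial (Fin n) K) (RatFuncField K n) r ∧
    v = eval b q / eval b r

/-- `f` is defined at `b`. -/
def IsDefinedAt {K : Type u} [Field K] {n : ℕ} (f : RatFuncField K n) (b : Fin n → K) : Prop :=
  ∃ v : K, HasEvalAt f b v

/-- A valuation `w` on an extension field extends `ν` if the valuation ring of `w`
intersected with `K` is the valuation ring of `ν`. -/
def ValExtends {K L : Type*} [Field K] [Field L] [Algebra K L] {Γ₀ Γ : Type*}
    [LinearOrderedCommGroupWithZero Γ₀] [LinearOrderedCommGroupWithZero Γ]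
    (ν : Valuation K Γ₀) (w : Valuation L Γ) : Prop :=
  ∀ a : K, w (algebraMap K L a) ≤ 1 ↔ ν a ≤ 1

/-- An OVF-valuation on `L` (over `(K,ν)`): a valuation extending `ν` admitting a
compatible field ordering. -/
def IsOVFValuation {K L : Type*} [Field K] [Field L] [Algebra K L] {Γ₀ Γ : Type*}
    [LinearOrderedCommGroupWithZero Γ₀] [LinearOrderedCommGroupWithZero Γ]
    (ν : Valuation K Γ₀) (w : Valuation L Γ) : Prop :=
  ValExtends ν w ∧ ∃ O : FieldOrdering L, O.IsCompatible w

/-- A valuation on `K(x₁,…,xₙ)` is near `b ∈ Kⁿ` if every rational function defined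
at `b` and vanishing at `b` has valuation above every element of the value group of `K`
(multiplicatively: `w f < w a` for every nonzero `a ∈ K`). -/
def IsNear {K : Type u} [Field K] {n : ℕ} {Γ : Type*} [LinearOrderedCommGroupWithZero Γ]
    (w : Valuation (RatFuncField K n) Γ) (b : Fin n → K) : Prop :=
  ∀ f : RatFuncField K n, HasEvalAt f b 0 →
    ∀ a : K, a ≠ 0 → w f < w (algebraMap K (RatFuncField K n) a)

/-- `f` is OVF-integral at `b`: every OVF-valuation near `b` takes `f` into its
valuation ring. -/
def IsOVFIntegralAt {K : Type u} [Field K] {Γ₀ : Type v} [LinearOrderedCommGroupWithZero Γ₀]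
    {n : ℕ} (ν : Valuation K Γ₀) (f : RatFuncField K n) (b : Fin n → K) : Prop :=
  ∀ (Γ : Type w) (_ : LinearOrderedCommGroupWithZero Γ)
    (wb : Valuation (RatFuncField K n) Γ),
    IsOVFValuation ν wb → IsNear wb b → wb f ≤ 1

/-- `Cone P`: the smallest subset of `L` containing `P` and all squares of nonzero
elements which is closed under addition and multiplication. -/
inductive InCone {L : Type*} [Field L] (P : Set L) : L → Prop
  | mem : ∀ x ∈ P, InCone P x
  | sq : ∀ x : L, x ≠ 0 → InCone P (x * x)
  | add : ∀ x y : L, InCone P x → InCone P y → InCone P (x + y)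
  | mul : ∀ x y : L, InCone P x → InCone P y → InCone P (x * y)

/-- The open semi-algebraic set `S_p̄ = {b | p_i(b) > 0 for all i}`. -/
def SetSP {K : Type u} [Field K] [LinearOrder K] [IsStrictOrderedRing K] {n m : ℕ}
    (p : Fin m → MvPolynomial (Fin n) K) : Set (Fin n → K) :=
  {b | ∀ i, 0 < eval b (p i)}

/-- The set `I_p̄ = { 1/(1+f) : f ∈ Cone({p₁,…,p_m}) }` inside `K(x₁,…,xₙ)`. -/
def SetIP {K : Type u} [Field K] {n m : ℕ} (p : Fin m → MvPolynomial (Fin n) K) :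
    Set (RatFuncField K n) :=
  {g | ∃ f : RatFuncField K n,
    InCone (Set.range fun i => algebraMap (MvPolynomial (Fin n) K) (RatFuncField K n) (p i)) f ∧
    g = (1 + f)⁻¹}

/-- The `O_ν`-subalgebra of `K(x₁,…,xₙ)` generated by a set `I` (as a subring
generated by `I` together with the image of `O_ν`). -/
noncomputable def OAlgebraGen {K : Type u} [Field K] {Γ₀ : Type v} [LinearOrderedCommGroupWithZero Γ₀]
    (ν : Valuation K Γ₀) {n : ℕ} (I : Set (RatFuncField K n)) : Subring (RatFuncField K n) :=
  Subring.closure ((algebraMap K (RatFuncField K n) '' {a : K | ν a ≤ 1}) ∪ I)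



/-- The multiplicative set `T = {1 + m·a : m ∈ M_ν, a ∈ A}` used for the integral radical. -/
def SetT {K : Type u} [Field K] {Γ₀ : Type v} [LinearOrderedCommGroupWithZero Γ₀]
    (ν : Valuation K Γ₀) {n : ℕ} (A : Subring (RatFuncField K n)) :
    Set (RatFuncField K n) :=
  {t | ∃ m : K, ν m < 1 ∧ ∃ a ∈ A, t = 1 + algebraMap K (RatFuncField K n) m * a}

/-- The localization `A_T` of `A` at `T`, realized inside `L` as the subring generated
by `A` together with the inverses of the elements of `T`. -/
noncomputable def LocAT {K : Type u} [Field K] {n : ℕ}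
    (A : Subring (RatFuncField K n)) (T : Set (RatFuncField K n)) :
    Subring (RatFuncField K n) :=
  Subring.closure ((A : Set (RatFuncField K n)) ∪ ((fun t => t⁻¹) '' T))

/-- The integral radical of `A`: the integral closure in `L` of the localization `A_T`. -/
noncomputable def IntegralRadical {K : Type u} [Field K] {Γ₀ : Type v}
    [LinearOrderedCommGroupWithZero Γ₀] (ν : Valuation K Γ₀) {n : ℕ}
    (A : Subring (RatFuncField K n)) : Set (RatFuncField K n) :=
  (integralClosure (LocAT A (SetT ν A)) (RatFuncField K n) :
    Subalgebra (LocAT A (SetT ν A)) (RatFuncField K n))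

/-- A semi-section of a valued field `(L, μ)` (with `μ` surjective, so that the nonzero
elements of `Γ` form the value group): a map `s : Γ → L` with `μ (s γ) = γ` such that
`s (γ₁γ₂) / (s γ₁ · s γ₂)` is always a square. -/
def IsSemiSection {L : Type*} [Field L] {Γ : Type*} [LinearOrderedCommGroupWithZero Γ]
    (μ : Valuation L Γ) (s : Γ → L) : Prop :=
  (∀ γ : Γ, γ ≠ 0 → μ (s γ) = γ) ∧
    ∀ γ₁ γ₂ : Γ, γ₁ ≠ 0 → γ₂ ≠ 0 →
      ∃ c : L, c ≠ 0 ∧ s (γ₁ * γ₂) = s γ₁ * s γ₂ * (c * c)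

/-- `y ∈ O_μ` and its residue is `>_ℓ 0` for the given ordering of the residue field. -/
def ResPos {L : Type*} [Field L] {Γ : Type*} [LinearOrderedCommGroupWithZero Γ]
    (μ : Valuation L Γ)
    (Oℓ : FieldOrdering (IsLocalRing.ResidueField μ.valuationSubring)) (y : L) : Prop :=
  ∃ u : μ.valuationSubring, (u : L) = y ∧
    Oℓ.Pos (IsLocalRing.residue (μ.valuationSubring) u)

/-- An ordering `OL` of `L` induces the ordering `Oℓ` of the residue field:
positive units of the valuation ring have positive residue. -/
def OrderingInduces {L : Type*} [Field L] {Γ : Type*} [LinearOrderedCommGroupWithZero Γ]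
    (μ : Valuation L Γ) (OL : FieldOrdering L)
    (Oℓ : FieldOrdering (IsLocalRing.ResidueField μ.valuationSubring)) : Prop :=
  ∀ u : μ.valuationSubring, μ (u : L) = 1 → OL.Pos (u : L) →
    Oℓ.Pos (IsLocalRing.residue (μ.valuationSubring) u)

/-- The set `S_{p̄,ḡ}`: points where all `p_i` are positive and all `g_j` are defined
with value in the valuation ring. -/
def SetSPG {K : Type u} [Field K] [LinearOrder K] [IsStrictOrderedRing K] {Γ₀ : Type v}
    [LinearOrderedCommGroupWithZero Γ₀] (ν : Valuation K Γ₀) {n m l : ℕ}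
    (p : Fin m → MvPolynomial (Fin n) K) (g : Fin l → RatFuncField K n) :
    Set (Fin n → K) :=
  {b | (∀ i, 0 < eval b (p i)) ∧ ∀ j, ∃ v : K, HasEvalAt (g j) b v ∧ ν v ≤ 1}

/-!
Substituting `xᵢ = bᵢ + t^eᵢ` embeds `K(x₁,…,xₙ)` into the field of Hahn series with
coefficients in `K` and exponents in `ℤⁿ`, ordered lexicographically: the expansion at `b`.
On Hahn series, order by the sign of the leading coefficient and value by the pair
(order, `ν` of the leading coefficient), compared lexicographically. Convexity of `O_ν` makes
this valuation compatible with the ordering, and on constants it is `ν`. Both pull back to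
`K(x₁,…,xₙ)`. A rational function vanishing at `b` has an expansion of positive order, so its
value lies below that of every nonzero constant.
-/

namespace FieldOrdering

variable {L M : Type*} [Field L] [Field M]

def comap (f : L →+* M) (O : FieldOrdering M) : FieldOrdering L where
  P := f ⁻¹' O.P
  add_mem x hx y hy := by simpa using O.add_mem _ hx _ hy
  mul_mem x hx y hy := by simpa using O.mul_mem _ hx _ hy
  square_mem x := by simpa using O.square_mem (f x)
  neg_one_not_mem := by simpa using O.neg_one_not_mem
  total x := by simpa using O.total (f x)

theorem pos_comap {f : L →+* M} {O : FieldOrdering M} {x : L} :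
    (O.comap f).Pos x ↔ O.Pos (f x) :=
  and_congr Iff.rfl (map_ne_zero f).symm

theorem IsCompatible.comap {Γ : Type*} [LinearOrderedCommGroupWithZero Γ] {O : FieldOrdering M}
    {w : Valuation M Γ} (h : O.IsCompatible w) (f : L →+* M) :
    (O.comap f).IsCompatible (w.comap f) := fun x y hx hyx =>
  h (f x) (f y) (pos_comap.1 hx) (by simpa using pos_comap.1 hyx)

end FieldOrdering

namespace HahnSeries

theorem leadingCoeff_eq_coeff_of_forall_lt {Γ R : Type*} [LinearOrder Γ] [Zero Γ] [Zero R]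
    {x : HahnSeries Γ R} {i : Γ} (hi : x.coeff i ≠ 0) (hlow : ∀ j < i, x.coeff j = 0) :
    x.leadingCoeff = x.coeff i := by
  have hx : x ≠ 0 := ne_zero_of_coeff_ne_zero hi
  rw [leadingCoeff_eq,
    le_antisymm (order_le_of_coeff_ne_zero hi) ((le_order_iff_forall hx).2 hlow)]

theorem order_div {Γ K : Type*} [AddCommGroup Γ] [LinearOrder Γ] [IsOrderedAddMonoid Γ]
    [Field K] {x y : HahnSeries Γ K} (hx : x ≠ 0) (hy : y ≠ 0) :
    (x / y).order = x.order - y.order := by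
  rw [eq_sub_iff_add_eq, ← order_mul (div_ne_zero hx hy) hy, div_mul_cancel₀ x hy]

section LexValuation

variable {Γ K Γ' : Type*} [AddCommGroup Γ] [LinearOrder Γ] [Field K]
  [LinearOrderedCommGroupWithZero Γ'] (μ : Valuation K Γ')

open Classical Multiplicative OrderDual in
noncomputable def lexValue (x : HahnSeries Γ K) : WithZero (Multiplicative Γᵒᵈ ×ₗ Γ'ˣ) :=
  if hx : x = 0 then 0 else
    ((toLex (ofAdd (toDual x.order), Units.mk0 (μ x.leadingCoeff)
      ((Valuation.ne_zero_iff μ).mpr (leadingCoeff_ne_zero.mpr hx))) :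
        Multiplicative Γᵒᵈ ×ₗ Γ'ˣ) : WithZero _)

open Multiplicative OrderDual in
theorem lexValue_of_ne_zero {x : HahnSeries Γ K} (hx : x ≠ 0) :
    lexValue μ x = ((toLex (ofAdd (toDual x.order), Units.mk0 (μ x.leadingCoeff)
      ((Valuation.ne_zero_iff μ).mpr (leadingCoeff_ne_zero.mpr hx))) :
        Multiplicative Γᵒᵈ ×ₗ Γ'ˣ) : WithZero _) :=
  dif_neg hx

theorem lexValue_le_iff {x z : HahnSeries Γ K} (hx : x ≠ 0) :
    lexValue μ z ≤ lexValue μ x ↔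
      (∀ g < x.order, z.coeff g = 0) ∧ μ (z.coeff x.order) ≤ μ x.leadingCoeff := by
  rcases eq_or_ne z 0 with rfl | hz
  · simp [lexValue]
  rw [lexValue_of_ne_zero μ hx, lexValue_of_ne_zero μ hz, WithZero.coe_le_coe,
    Prod.Lex.toLex_le_toLex, ← le_order_iff_forall hz]
  simp only [Multiplicative.ofAdd_lt, OrderDual.toDual_lt_toDual, EmbeddingLike.apply_eq_iff_eq,
    ← Units.val_le_val, Units.val_mk0]
  rcases lt_trichotomy x.order z.order with h | h | h
  · simp [h, h.le, coeff_eq_zero_of_lt_order h]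
  · simp [h, ← leadingCoeff_eq]
  · simp [h.not_gt, h.not_ge, h.ne]

variable [IsOrderedAddMonoid Γ]

noncomputable def lexValuation :
    Valuation (HahnSeries Γ K) (WithZero (Multiplicative Γᵒᵈ ×ₗ Γ'ˣ)) where
  toFun := lexValue μ
  map_zero' := dif_pos rfl
  map_one' := by
    rw [lexValue_of_ne_zero μ one_ne_zero, ← WithZero.coe_one, WithZero.coe_inj]
    exact congrArg toLex (Prod.ext (by simp) (Units.ext (by simp)))
  map_mul' x y := by
    rcases eq_or_ne x 0 with rfl | hx
    · simp [lexValue]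
    rcases eq_or_ne y 0 with rfl | hy
    · simp [lexValue]
    rw [lexValue_of_ne_zero μ (mul_ne_zero hx hy), lexValue_of_ne_zero μ hx,
      lexValue_of_ne_zero μ hy, ← WithZero.coe_mul, WithZero.coe_inj]
    exact congrArg toLex
      (Prod.ext (by simp [order_mul hx hy]; rfl) (Units.ext (by simp [leadingCoeff_mul]; rfl)))
  map_add_le_max' x y := by
    wlog h : lexValue μ y ≤ lexValue μ x generalizing x y
    · rw [add_comm, max_comm]
      exact this y x (le_of_not_ge h)
    rcases eq_or_ne x 0 with rfl | hx
    · rw [zero_add]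
      exact le_max_right _ _
    obtain ⟨hy_low, hy_lead⟩ := (lexValue_le_iff μ hx).1 h
    refine le_max_of_le_left ((lexValue_le_iff μ hx).2 ⟨fun g hg => ?_, ?_⟩)
    · rw [coeff_add, coeff_eq_zero_of_lt_order hg, hy_low g hg, add_zero]
    · rw [coeff_add, ← leadingCoeff_eq]
      exact μ.map_add_le le_rfl hy_lead

theorem lexValuation_le_iff {x z : HahnSeries Γ K} (hx : x ≠ 0) :
    lexValuation μ z ≤ lexValuation μ x ↔
      (∀ g < x.order, z.coeff g = 0) ∧ μ (z.coeff x.order) ≤ μ x.leadingCoeff :=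
  lexValue_le_iff μ hx

theorem lexValuation_C_le_one_iff (a : K) :
    lexValuation μ (C a : HahnSeries Γ K) ≤ 1 ↔ μ a ≤ 1 := by
  rw [← (lexValuation μ).map_one, lexValuation_le_iff μ one_ne_zero]
  simp +contextual [C_apply, LT.lt.ne]

theorem lexValuation_lt_lexValuation_C {x : HahnSeries Γ K} (hx : 0 < x.order) {a : K}
    (ha : a ≠ 0) : lexValuation μ x < lexValuation μ (C a) := by
  have hx0 : x ≠ 0 := by
    rintro rfl
    simp at hx
  refine lt_of_not_ge fun h => ha ?_
  simpa [C_apply] using ((lexValuation_le_iff μ hx0).1 h).1 0 hx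

end LexValuation

section LexOrdering

variable {Γ K : Type*} [AddCommGroup Γ] [LinearOrder Γ] [IsOrderedAddMonoid Γ] [Field K]
  [LinearOrder K]

theorem lexValuation_le_of_lt {Γ' : Type*} [LinearOrderedCommGroupWithZero Γ']
    {μ : Valuation K Γ'} (hμ : ∀ a b : K, 0 < a → a < b → μ a ≤ μ b) {x y : HahnSeries Γ K}
    (hx : 0 < toLex x) (hxy : toLex x < toLex y) : lexValuation μ x ≤ lexValuation μ y := by
  have hy : y ≠ 0 := (hx.trans hxy).ne'
  have hx_lead : 0 < x.leadingCoeff := leadingCoeff_pos_iff.mpr hx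
  obtain ⟨i, hagree, hlt⟩ := (lt_iff _ _).mp hxy
  simp only [ofLex_toLex] at hagree hlt
  have hyi : y.order ≤ i := by
    by_contra! hi
    have hxi : x.coeff i < 0 := coeff_eq_zero_of_lt_order hi ▸ hlt
    have hlead : x.leadingCoeff = x.coeff i := leadingCoeff_eq_coeff_of_forall_lt hxi.ne
      fun j hj => (hagree j hj).trans (coeff_eq_zero_of_lt_order (hj.trans hi))
    exact (hlead ▸ hx_lead).not_gt hxi
  rw [lexValuation_le_iff μ hy]
  refine ⟨fun g hg => (hagree g (hg.trans_le hyi)).trans (coeff_eq_zero_of_lt_order hg), ?_⟩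
  rcases hyi.lt_or_eq with h | rfl
  · rw [hagree _ h, leadingCoeff_eq]
  rcases eq_or_ne (x.coeff y.order) 0 with h0 | h0
  · simp [h0]
  have hlead : x.leadingCoeff = x.coeff y.order := leadingCoeff_eq_coeff_of_forall_lt h0
    fun j hj => (hagree j hj).trans (coeff_eq_zero_of_lt_order hj)
  exact hμ _ _ (hlead ▸ hx_lead) (leadingCoeff_eq (x := y) ▸ hlt)

variable [IsStrictOrderedRing K]

/-- `0 ≤ toLex x` says that the leading coefficient of `x` is nonnegative
(`HahnSeries.leadingCoeff_nonneg_iff`). -/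
def lexOrdering : FieldOrdering (HahnSeries Γ K) where
  P := {x | 0 ≤ toLex x}
  add_mem x hx y hy := show 0 ≤ toLex x + toLex y from add_nonneg hx hy
  mul_mem x hx y hy := show 0 ≤ toLex x * toLex y from mul_nonneg hx hy
  square_mem x := mul_self_nonneg (toLex x)
  neg_one_not_mem := (neg_neg_of_pos (zero_lt_one' (Lex (HahnSeries Γ K)))).not_ge
  total x := (le_total 0 (toLex x)).imp id neg_nonneg.mpr

theorem lexOrdering_pos_iff {x : HahnSeries Γ K} : lexOrdering.Pos x ↔ 0 < toLex x := by
  show 0 ≤ toLex x ∧ x ≠ 0 ↔ _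
  exact ⟨fun h => lt_of_le_of_ne' h.1 h.2, fun h => ⟨h.le, h.ne'⟩⟩

theorem lexOrdering_isCompatible {Γ' : Type*} [LinearOrderedCommGroupWithZero Γ']
    {μ : Valuation K Γ'} (hμ : ∀ a b : K, 0 < a → a < b → μ a ≤ μ b) :
    lexOrdering.IsCompatible (lexValuation (Γ := Γ) μ) := fun _ _ hx hyx =>
  lexValuation_le_of_lt hμ (lexOrdering_pos_iff.1 hx) (sub_pos.1 (lexOrdering_pos_iff.1 hyx))

end LexOrdering

end HahnSeries

namespace MvPolynomial

section ToHahnSeries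

variable {σ R Γ : Type*} [CommRing R] [AddCommMonoid Γ] [PartialOrder Γ]
  [IsOrderedCancelAddMonoid Γ]

noncomputable def toHahnSeries (ι : (σ →₀ ℕ) →+ Γ) : MvPolynomial σ R →ₐ[R] HahnSeries Γ R :=
  AddMonoidAlgebra.lift R (HahnSeries Γ R) (σ →₀ ℕ)
    { toFun := fun d => HahnSeries.single (ι d.toAdd) 1
      map_one' := by simp
      map_mul' := fun d e => by simp [HahnSeries.single_mul_single] }

variable (ι : (σ →₀ ℕ) →+ Γ)

theorem toHahnSeries_monomial (d : σ →₀ ℕ) (c : R) :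
    toHahnSeries ι (monomial d c) = HahnSeries.single (ι d) c := by
  ext g
  simp [toHahnSeries, monomial, HahnSeries.coeff_single, HahnSeries.coeff_smul]

theorem coeff_toHahnSeries_apply (hι : Function.Injective ι) (p : MvPolynomial σ R)
    (d : σ →₀ ℕ) : (toHahnSeries ι p).coeff (ι d) = p.coeff d := by
  induction p using MvPolynomial.induction_on' with
  | monomial e c =>
    classical
    simp [toHahnSeries_monomial, HahnSeries.coeff_single, coeff_monomial, hι.eq_iff, eq_comm]
  | add p q hp hq => simp [hp, hq]

theorem coeff_toHahnSeries_of_notMem_range (p : MvPolynomial σ R) {g : Γ}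
    (hg : g ∉ Set.range ι) : (toHahnSeries ι p).coeff g = 0 := by
  induction p using MvPolynomial.induction_on' with
  | monomial e c =>
    rw [toHahnSeries_monomial, HahnSeries.coeff_single_of_ne fun h => hg ⟨e, h.symm⟩]
  | add p q hp hq => simp [hp, hq]

theorem toHahnSeries_injective (hι : Function.Injective ι) :
    Function.Injective (toHahnSeries (R := R) ι) := by
  refine (injective_iff_map_eq_zero _).2 fun p hp => ?_
  ext d
  rw [← coeff_toHahnSeries_apply ι hι, hp, HahnSeries.coeff_zero, coeff_zero]

end ToHahnSeries

section Order

variable {σ R Γ : Type*} [CommRing R] [AddCommMonoid Γ] [LinearOrder Γ]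
  [IsOrderedCancelAddMonoid Γ] {ι : (σ →₀ ℕ) →+ Γ} {p : MvPolynomial σ R}

theorem coeff_toHahnSeries_zero (hι : Function.Injective ι) :
    (toHahnSeries ι p).coeff 0 = constantCoeff p := by
  rw [← map_zero ι, coeff_toHahnSeries_apply ι hι, constantCoeff_eq]

theorem coeff_toHahnSeries_of_neg (hι_nonneg : ∀ d, 0 ≤ ι d) {g : Γ} (hg : g < 0) :
    (toHahnSeries ι p).coeff g = 0 :=
  coeff_toHahnSeries_of_notMem_range ι p fun ⟨d, hd⟩ => (hι_nonneg d).not_gt (hd ▸ hg)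

theorem order_toHahnSeries_eq_zero (hι : Function.Injective ι) (hι_nonneg : ∀ d, 0 ≤ ι d)
    (hp : constantCoeff p ≠ 0) : (toHahnSeries ι p).order = 0 := by
  rw [← coeff_toHahnSeries_zero hι] at hp
  exact le_antisymm (HahnSeries.order_le_of_coeff_ne_zero hp)
    ((HahnSeries.le_order_iff_forall (HahnSeries.ne_zero_of_coeff_ne_zero hp)).2
      fun _ hg => coeff_toHahnSeries_of_neg hι_nonneg hg)

theorem order_toHahnSeries_pos (hι : Function.Injective ι) (hι_nonneg : ∀ d, 0 ≤ ι d)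
    (hp : p ≠ 0) (hp0 : constantCoeff p = 0) : 0 < (toHahnSeries ι p).order := by
  have hne : toHahnSeries ι p ≠ 0 := (map_ne_zero_iff _ (toHahnSeries_injective ι hι)).2 hp
  refine lt_of_le_of_ne ((HahnSeries.le_order_iff_forall hne).2
    fun _ hg => coeff_toHahnSeries_of_neg hι_nonneg hg) fun h => hne ?_
  rw [← HahnSeries.coeff_order_eq_zero, ← h, coeff_toHahnSeries_zero hι, hp0]

end Order

section Taylor

variable {σ R : Type*} [CommRing R] (b : σ → R)

noncomputable def taylor : MvPolynomial σ R ≃ₐ[R] MvPolynomial σ R :=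
  AlgEquiv.ofAlgHom (aeval fun i => X i + C (b i)) (aeval fun i => X i - C (b i))
    (algHom_ext fun i => by simp) (algHom_ext fun i => by simp)

theorem constantCoeff_taylor (p : MvPolynomial σ R) : constantCoeff (taylor b p) = eval b p := by
  induction p using MvPolynomial.induction_on <;> simp_all [taylor]

end Taylor

end MvPolynomial

section LexExponent

variable {σ : Type*}

def lexExponent : (σ →₀ ℕ) →+ Lex (σ → ℤ) where
  toFun d := toLex fun i => (d i : ℤ)
  map_zero' := by simp; rfl
  map_add' d e := by simp; rfl

theorem lexExponent_injective : Function.Injective (lexExponent (σ := σ)) := fun d e h => by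
  ext i
  exact_mod_cast congrFun (toLex.injective h) i

theorem lexExponent_nonneg [LinearOrder σ] [WellFoundedLT σ] (d : σ →₀ ℕ) :
    0 ≤ lexExponent d :=
  Pi.toLex_monotone fun i => Int.natCast_nonneg (d i)

end LexExponent

section TaylorToHahnSeries

variable {σ R : Type*} [LinearOrder σ] [CommRing R] (b : σ → R)

theorem toHahnSeries_comp_taylor_injective :
    Function.Injective ((toHahnSeries (R := R) lexExponent).comp (taylor b).toAlgHom) := by
  rw [AlgHom.coe_comp]
  exact (toHahnSeries_injective _ lexExponent_injective).comp (taylor b).injective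

theorem toHahnSeries_taylor_ne_zero {p : MvPolynomial σ R} (hp : p ≠ 0) :
    toHahnSeries lexExponent (taylor b p) ≠ 0 := fun h =>
  hp (toHahnSeries_comp_taylor_injective b (h.trans (map_zero _).symm))

end TaylorToHahnSeries

section HahnExpansion

variable {K : Type*} [Field K] {n : ℕ} (b : Fin n → K)

noncomputable def hahnExpansion : RatFuncField K n →ₐ[K] HahnSeries (Lex (Fin n → ℤ)) K :=
  IsFractionRing.liftAlgHom (toHahnSeries_comp_taylor_injective b)

theorem hahnExpansion_algebraMap_mvPolynomial (p : MvPolynomial (Fin n) K) :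
    hahnExpansion b (algebraMap _ _ p) = toHahnSeries lexExponent (taylor b p) := by
  rw [hahnExpansion, IsFractionRing.liftAlgHom_apply, IsFractionRing.lift_algebraMap]
  rfl

theorem hahnExpansion_algebraMap (a : K) :
    hahnExpansion b (algebraMap K (RatFuncField K n) a) = HahnSeries.C a := by
  rw [AlgHom.commutes, HahnSeries.algebraMap_apply]
  rfl

theorem order_hahnExpansion_pos {f : RatFuncField K n} (hf : HasEvalAt f b 0) (hf0 : f ≠ 0) :
    0 < (hahnExpansion b f).order := by
  obtain ⟨q, r, hr, rfl, hq⟩ := hf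
  have hq_ne : q ≠ 0 := by
    rintro rfl
    simp at hf0
  have hr_ne : r ≠ 0 := by
    rintro rfl
    simp at hr
  have hq0 : eval b q = 0 := by simpa [hr] using hq.symm
  rw [map_div₀, hahnExpansion_algebraMap_mvPolynomial, hahnExpansion_algebraMap_mvPolynomial,
    HahnSeries.order_div (toHahnSeries_taylor_ne_zero b hq_ne)
      (toHahnSeries_taylor_ne_zero b hr_ne),
    order_toHahnSeries_eq_zero (p := taylor b r) lexExponent_injective lexExponent_nonneg
      (by rwa [constantCoeff_taylor]), sub_zero]
  exact order_toHahnSeries_pos lexExponent_injective lexExponent_nonneg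
    (EmbeddingLike.map_ne_zero_iff.2 hq_ne) (by rw [constantCoeff_taylor, hq0])

theorem isNear_comap_lexValuation {Γ' : Type*} [LinearOrderedCommGroupWithZero Γ']
    (μ : Valuation K Γ') :
    IsNear ((HahnSeries.lexValuation μ).comap (hahnExpansion b).toRingHom) b := by
  intro f hf a ha
  simp only [Valuation.comap_apply, AlgHom.toRingHom_eq_coe, RingHom.coe_coe,
    hahnExpansion_algebraMap]
  rcases eq_or_ne f 0 with rfl | hf0
  · rw [map_zero, map_zero]
    exact zero_lt_iff.2 ((Valuation.ne_zero_iff _).2 (HahnSeries.C_ne_zero ha))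
  · exact HahnSeries.lexValuation_lt_lexValuation_C μ (order_hahnExpansion_pos b hf hf0) ha

theorem valExtends_comap_lexValuation {Γ' : Type*} [LinearOrderedCommGroupWithZero Γ']
    (μ : Valuation K Γ') :
    ValExtends μ ((HahnSeries.lexValuation μ).comap (hahnExpansion b).toRingHom) := fun a => by
  rw [Valuation.comap_apply, AlgHom.toRingHom_eq_coe, RingHom.coe_coe, hahnExpansion_algebraMap,
    HahnSeries.lexValuation_C_le_one_iff]

end HahnExpansion

/-- For every `b ∈ Kⁿ` there is an OVF-valuation on `K(x₁,…,xₙ)` near `b`. -/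
theorem exists_ovf_valuation_near {K : Type u} [Field K] [LinearOrder K] [IsStrictOrderedRing K] {Γ₀ : Type v}
    [LinearOrderedCommGroupWithZero Γ₀] (ν : Valuation K Γ₀) (hK : IsRCVF ν)
    {n : ℕ} (b : Fin n → K) :
    ∃ (Γ : Type u) (_ : LinearOrderedCommGroupWithZero Γ)
      (w : Valuation (RatFuncField K n) Γ), IsOVFValuation ν w ∧ IsNear w b := by
  obtain ⟨-, hν⟩ := hK
  -- an equivalent valuation whose value group lives in `Type u`
  set μ := ν.valuationSubring.valuation
  have hνμ : ν.IsEquiv μ := ν.isEquiv_valuation_valuationSubring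
  have hμ : ∀ x y : K, 0 < x → x < y → μ x ≤ μ y := fun x y hx hxy =>
    (hνμ x y).1 (hν x y hx hxy)
  let φ := (hahnExpansion b).toRingHom
  refine ⟨_, inferInstance, (HahnSeries.lexValuation μ).comap φ,
    ⟨fun a => (valExtends_comap_lexValuation b μ a).trans hνμ.le_one_iff_le_one.symm, _,
      (HahnSeries.lexOrdering_isCompatible hμ).comap φ⟩,
    isNear_comap_lexValuation b μ⟩
end

section
/- Let (K,ν) be a real closed valued field, L = K(x₁,…,xₙ), and let ν_b be an OVF-valuation on L near b ∈ Kⁿ. Assume p ∈ L is defined at b and p(b) > 0. Then for every order ≤_L on L which is compatible with ν_b one has p ≥_L 0. -/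
universe u v w

open MvPolynomial

/-! The constant `c = p(b)` is a square in `K`, hence positive for every ordering of `L`.
Since `p - c` vanishes at `b`, nearness makes `p - c` infinitesimal relative to `c`. If `p` were
negative, then `0 < c < c - p`, and compatibility would give `ν_b(c) ≤ ν_b(c - p) = ν_b(p - c)`,
which is impossible. -/

namespace FieldOrdering

variable {L : Type*} [Field L] (O : FieldOrdering L)

theorem zero_mem : (0 : L) ∈ O.P := by
  simpa using O.square_mem 0

theorem pos_neg_of_not_mem {x : L} (hx : x ∉ O.P) : O.Pos (-x) :=
  ⟨(O.total x).resolve_left hx, neg_ne_zero.mpr fun h => hx (h ▸ O.zero_mem)⟩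

theorem pos_of_isSquare {x : L} (hx : IsSquare x) (hx0 : x ≠ 0) : O.Pos x := by
  obtain ⟨y, rfl⟩ := hx
  exact ⟨O.square_mem y, hx0⟩

theorem IsCompatible.mem_of_valuation_sub_lt {Γ : Type*} [LinearOrderedCommGroupWithZero Γ]
    {O : FieldOrdering L} {w : Valuation L Γ} (hcomp : O.IsCompatible w) {c x : L}
    (hc : O.Pos c) (hxc : w (x - c) < w c) : x ∈ O.P := by
  by_contra hx
  have hc_le : w c ≤ w (c - x) := hcomp c (c - x) hc (by simpa using O.pos_neg_of_not_mem hx)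
  exact (hxc.trans_le hc_le).ne (w.map_sub_swap x c)

end FieldOrdering

theorem HasEvalAt.sub_algebraMap {K : Type u} [Field K] {n : ℕ} {f : RatFuncField K n}
    {b : Fin n → K} {v : K} (hf : HasEvalAt f b v) (a : K) :
    HasEvalAt (f - algebraMap K (RatFuncField K n) a) b (v - a) := by
  obtain ⟨q, r, hr, rfl, rfl⟩ := hf
  have hr' : algebraMap (MvPolynomial (Fin n) K) (RatFuncField K n) r ≠ 0 :=
    IsFractionRing.to_map_ne_zero_of_mem_nonZeroDivisors
      (mem_nonZeroDivisors_of_ne_zero fun h => hr (by simp [h]))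
  refine ⟨q - C a * r, r, hr, ?_, ?_⟩
  · rw [IsScalarTower.algebraMap_apply K (MvPolynomial (Fin n) K), algebraMap_eq]
    field_simp
    rw [map_sub, map_mul, mul_comm]
  · simp only [map_sub, map_mul, eval_C]
    field_simp

theorem nonneg_of_pos_at_near_point_general {K : Type u} [Field K] [LinearOrder K] [IsStrictOrderedRing K] {Γ₀ : Type v}
    [LinearOrderedCommGroupWithZero Γ₀] (ν : Valuation K Γ₀) (hK : IsRCVF ν)
    {n : ℕ} {Γ : Type w} [LinearOrderedCommGroupWithZero Γ]
    (wb : Valuation (RatFuncField K n) Γ) (b : Fin n → K)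
    (hnear : IsNear wb b)
    (p : RatFuncField K n) (v : K) (hp : HasEvalAt p b v) (hv : 0 < v)
    (O : FieldOrdering (RatFuncField K n)) (hcomp : O.IsCompatible wb) :
    p ∈ O.P := by
  have hvanish : HasEvalAt (p - algebraMap K _ v) b 0 := sub_self v ▸ hp.sub_algebraMap v
  obtain ⟨y, hy⟩ := hK.1.1 v hv.le
  have hc : O.Pos (algebraMap K _ v) :=
    O.pos_of_isSquare ⟨algebraMap K _ y, by rw [← hy, map_mul]⟩ ((map_ne_zero _).mpr hv.ne')
  exact hcomp.mem_of_valuation_sub_lt hc (hnear _ hvanish v hv.ne')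

/-- If `ν_b` is an OVF-valuation near `b` and `p(b) > 0`, then `p ≥_L 0`
for every ordering of `L` compatible with `ν_b`. -/
theorem nonneg_of_pos_at_near_point {K : Type u} [Field K] [LinearOrder K] [IsStrictOrderedRing K] {Γ₀ : Type v}
    [LinearOrderedCommGroupWithZero Γ₀] (ν : Valuation K Γ₀) (hK : IsRCVF ν)
    {n : ℕ} {Γ : Type w} [LinearOrderedCommGroupWithZero Γ]
    (wb : Valuation (RatFuncField K n) Γ) (b : Fin n → K)
    (hovf : IsOVFValuation ν wb) (hnear : IsNear wb b)
    (p : RatFuncField K n) (v : K) (hp : HasEvalAt p b v) (hv : 0 < v)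
    (O : FieldOrdering (RatFuncField K n)) (hcomp : O.IsCompatible wb) :
    p ∈ O.P :=
  nonneg_of_pos_at_near_point_general ν hK wb b hnear p v hp hv O hcomp
end

section
/- Let (K,ν) be a real closed valued field, L = K(x₁,…,xₙ), and let p₁,…,p_m ∈ K[x₁,…,xₙ] be polynomials with S_p̄ nonempty. Then for every f ∈ Cone({p₁,…,p_m}) (computed in L) one has 1 + f ≠ 0 and the rational function 1/(1+f) is OVF-integral on S_p̄. -/
universe u v w

open MvPolynomial

/-! Fix `b ∈ S_p̄`, an OVF-valuation `w` near `b` and an ordering `O` compatible with `w`.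
Each `pᵢ` differs from the constant `pᵢ(b) > 0`, which is a square in the real closed field
`K` and hence `O`-positive, by a function vanishing at `b`, whose valuation is infinitesimal
compared to `pᵢ(b)`; convexity of the valuation ring then forces `pᵢ >_O 0`. So every `f` in
the cone is `O`-positive, `0 < 1 < 1 + f`, and convexity gives `w 1 ≤ w (1 + f)`.

For `1 + f ≠ 0`, write `f · g² = F` with `g ≠ 0` and `F ≥ 0` on `S_p̄`. As `S_p̄` is a nonempty
open set, `g` is nonzero at some point of it, where `g² + F > 0`. -/

namespace FieldOrdering

variable {L : Type*} [Field L] (O : FieldOrdering L)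

theorem pos_one : O.Pos 1 :=
  ⟨by simpa using O.square_mem 1, one_ne_zero⟩

theorem pos_mul_self {x : L} (hx : x ≠ 0) : O.Pos (x * x) :=
  ⟨O.square_mem x, mul_ne_zero hx hx⟩

theorem pos_mul {x y : L} (hx : O.Pos x) (hy : O.Pos y) : O.Pos (x * y) :=
  ⟨O.mul_mem _ hx.1 _ hy.1, mul_ne_zero hx.2 hy.2⟩

theorem not_pos_neg {x : L} (hx : O.Pos x) : ¬O.Pos (-x) := by
  intro hnx
  have h := O.mul_mem _ (O.mul_mem _ hx.1 _ hnx.1) _ (O.square_mem x⁻¹)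
  have hx0 := hx.2
  rw [show x * -x * (x⁻¹ * x⁻¹) = -1 by field_simp] at h
  exact O.neg_one_not_mem h

theorem pos_add {x y : L} (hx : O.Pos x) (hy : O.Pos y) : O.Pos (x + y) := by
  refine ⟨O.add_mem _ hx.1 _ hy.1, fun h => O.not_pos_neg hx ?_⟩
  rwa [← eq_neg_of_add_eq_zero_right h]

theorem pos_or_pos_neg {x : L} (hx : x ≠ 0) : O.Pos x ∨ O.Pos (-x) :=
  (O.total x).imp (⟨·, hx⟩) (⟨·, neg_ne_zero.mpr hx⟩)

theorem pos_algebraMap {K : Type*} [Field K] [LinearOrder K] [IsStrictOrderedRing K]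
    [Algebra K L] (hK : IsRealClosedField K) {c : K} (hc : 0 < c) : O.Pos (algebraMap K L c) := by
  obtain ⟨y, rfl⟩ := hK.1 c hc.le
  rw [map_mul]
  exact O.pos_mul_self ((map_ne_zero _).mpr fun hy => by simp [hy] at hc)

namespace IsCompatible

variable {O} {Γ : Type*} [LinearOrderedCommGroupWithZero Γ] {w : Valuation L Γ}

theorem pos_of_valuation_sub_lt (hO : O.IsCompatible w) {a x : L} (ha : O.Pos a)
    (h : w (x - a) < w a) : O.Pos x := by
  have hx0 : x ≠ 0 := by
    rintro rfl
    simp at h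
  refine (O.pos_or_pos_neg hx0).resolve_right fun hnx => ?_
  have hle := hO a (a - x) ha (by rwa [sub_sub_cancel_left])
  rw [Valuation.map_sub_swap] at hle
  exact h.not_ge hle

theorem valuation_inv_one_add_le_one (hO : O.IsCompatible w) {f : L} (hf : O.Pos f) :
    w (1 + f)⁻¹ ≤ 1 := by
  have h := hO 1 (1 + f) O.pos_one (by rwa [add_sub_cancel_left])
  rw [map_one] at h
  rw [map_inv₀]
  exact inv_le_one_of_one_le₀ h

end IsCompatible

end FieldOrdering

theorem InCone.pos {L : Type*} [Field L] {P : Set L} {O : FieldOrdering L}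
    (hP : ∀ x ∈ P, O.Pos x) {f : L} (hf : InCone P f) : O.Pos f := by
  induction hf with
  | mem x hx => exact hP x hx
  | sq x hx => exact O.pos_mul_self hx
  | add x y _ _ hx hy => exact O.pos_add hx hy
  | mul x y _ _ hx hy => exact O.pos_mul hx hy

section OrderedField

variable {K : Type*} [Field K] [LinearOrder K] [IsStrictOrderedRing K]

theorem InCone.exists_mul_sq_eq_algebraMap {σ ι : Type*} {S : Set (σ → K)}
    {p : ι → MvPolynomial σ K} (hp : ∀ i, ∀ b ∈ S, 0 ≤ eval b (p i))
    {f : FractionRing (MvPolynomial σ K)}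
    (hf : InCone (Set.range fun i =>
      algebraMap (MvPolynomial σ K) (FractionRing (MvPolynomial σ K)) (p i)) f) :
    ∃ F g : MvPolynomial σ K, g ≠ 0 ∧ (∀ b ∈ S, 0 ≤ eval b F) ∧
      f * algebraMap _ _ g ^ 2 = algebraMap _ (FractionRing (MvPolynomial σ K)) F := by
  induction hf with
  | mem x hx =>
    obtain ⟨i, rfl⟩ := hx
    exact ⟨p i, 1, one_ne_zero, hp i, by simp⟩
  | sq x _ =>
    obtain ⟨u, v, hv, rfl⟩ := IsFractionRing.div_surjective (A := MvPolynomial σ K) x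
    have hv0 : algebraMap _ (FractionRing (MvPolynomial σ K)) v ≠ 0 :=
      IsFractionRing.to_map_ne_zero_of_mem_nonZeroDivisors hv
    refine ⟨u * u, v, nonZeroDivisors.ne_zero hv,
      fun b _ => by simpa using mul_self_nonneg _, ?_⟩
    field_simp
    simp only [map_mul]
    ring
  | add x y _ _ hx hy =>
    obtain ⟨F₁, g₁, hg₁, hF₁, e₁⟩ := hx
    obtain ⟨F₂, g₂, hg₂, hF₂, e₂⟩ := hy
    refine ⟨F₁ * g₂ ^ 2 + F₂ * g₁ ^ 2, g₁ * g₂, mul_ne_zero hg₁ hg₂,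
      fun b hb => by
        simp only [map_add, map_mul, map_pow]
        exact add_nonneg (mul_nonneg (hF₁ b hb) (sq_nonneg _))
          (mul_nonneg (hF₂ b hb) (sq_nonneg _)),
      ?_⟩
    simp only [map_add, map_mul, map_pow, ← e₁, ← e₂]
    ring
  | mul x y _ _ hx hy =>
    obtain ⟨F₁, g₁, hg₁, hF₁, e₁⟩ := hx
    obtain ⟨F₂, g₂, hg₂, hF₂, e₂⟩ := hy
    refine ⟨F₁ * F₂, g₁ * g₂, mul_ne_zero hg₁ hg₂,
      fun b hb => by simpa only [map_mul] using mul_nonneg (hF₁ b hb) (hF₂ b hb), ?_⟩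
    simp only [map_mul, ← e₁, ← e₂]
    ring

theorem MvPolynomial.exists_eval_ne_zero_of_isOpen [TopologicalSpace K] [OrderTopology K]
    {σ : Type*} [Finite σ] {U : Set (σ → K)} (hU : IsOpen U) (hne : U.Nonempty)
    {q : MvPolynomial σ K} (hq : q ≠ 0) : ∃ b ∈ U, eval b q ≠ 0 := by
  by_contra! h
  obtain ⟨b₀, hb₀⟩ := hne
  obtain ⟨u, hu, hsub⟩ := isOpen_pi_iff'.mp hU b₀ hb₀
  refine hq (funext_set u (fun i => infinite_of_mem_nhds (b₀ i) ((hu i).1.mem_nhds (hu i).2))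
    fun x hx => ?_)
  rw [h x (hsub hx), map_zero]

theorem isOpen_setSP [TopologicalSpace K] [OrderTopology K] {n m : ℕ}
    (p : Fin m → MvPolynomial (Fin n) K) : IsOpen (SetSP p) := by
  rw [SetSP, Set.ofPred_forall]
  exact isOpen_iInter_of_finite fun i => isOpen_lt continuous_const (continuous_eval _)

end OrderedField

section RatFunc

variable {K : Type u} [Field K] {n : ℕ}

theorem IsNear.valuation_sub_algebraMap_eval_lt {Γ : Type*} [LinearOrderedCommGroupWithZero Γ]
    {w : Valuation (RatFuncField K n) Γ} {b : Fin n → K} (hw : IsNear w b)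
    (q : MvPolynomial (Fin n) K) (hq : eval b q ≠ 0) :
    w (algebraMap _ _ q - algebraMap K _ (eval b q)) < w (algebraMap K _ (eval b q)) := by
  refine hw _ ⟨q - C (eval b q), 1, by simp, ?_, by simp⟩ _ hq
  rw [map_one, div_one, map_sub, IsScalarTower.algebraMap_apply K (MvPolynomial (Fin n) K),
    MvPolynomial.algebraMap_eq]

variable [LinearOrder K] [IsStrictOrderedRing K]

theorem FieldOrdering.IsCompatible.pos_of_isNear (hK : IsRealClosedField K)
    {O : FieldOrdering (RatFuncField K n)} {Γ : Type*} [LinearOrderedCommGroupWithZero Γ]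
    {w : Valuation (RatFuncField K n) Γ} (hO : O.IsCompatible w) {b : Fin n → K}
    (hw : IsNear w b) {q : MvPolynomial (Fin n) K} (hq : 0 < eval b q) :
    O.Pos (algebraMap _ _ q) :=
  hO.pos_of_valuation_sub_lt (O.pos_algebraMap hK hq)
    (hw.valuation_sub_algebraMap_eval_lt q hq.ne')

theorem one_add_ne_zero_of_inCone {m : ℕ} {p : Fin m → MvPolynomial (Fin n) K}
    (hS : (SetSP p).Nonempty) {f : RatFuncField K n}
    (hf : InCone
      (Set.range fun i => algebraMap (MvPolynomial (Fin n) K) (RatFuncField K n) (p i)) f) :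
    1 + f ≠ 0 := by
  obtain ⟨F, g, hg, hF, hfg⟩ :=
    hf.exists_mul_sq_eq_algebraMap (S := SetSP p) fun i b hb => (hb i).le
  let _ : TopologicalSpace K := Preorder.topology K
  have : OrderTopology K := ⟨rfl⟩
  obtain ⟨b, hb, hgb⟩ := exists_eval_ne_zero_of_isOpen (isOpen_setSP p) hS hg
  have hgF : g ^ 2 + F ≠ 0 := fun h => by
    have := congrArg (eval b) h
    rw [map_add, map_pow, map_zero] at this
    exact (add_pos_of_pos_of_nonneg (by positivity) (hF b hb)).ne' this
  intro h
  refine hgF (IsFractionRing.injective (MvPolynomial (Fin n) K) (RatFuncField K n) ?_)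
  rw [map_zero, map_add, map_pow, ← hfg]
  linear_combination algebraMap _ (RatFuncField K n) g ^ 2 * h

end RatFunc

/-- For `f ∈ Cone({p₁,…,p_m})`, `1 + f ≠ 0` and `1/(1+f)` is
OVF-integral on `S_p̄`. -/
theorem one_add_cone_inv_ovf_integral {K : Type u} [Field K] [LinearOrder K] [IsStrictOrderedRing K] {Γ₀ : Type v}
    [LinearOrderedCommGroupWithZero Γ₀] (ν : Valuation K Γ₀) (hK : IsRCVF ν)
    {n m : ℕ} (p : Fin m → MvPolynomial (Fin n) K) (hS : (SetSP p).Nonempty)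
    (f : RatFuncField K n)
    (hf : InCone
      (Set.range fun i => algebraMap (MvPolynomial (Fin n) K) (RatFuncField K n) (p i)) f) :
    1 + f ≠ 0 ∧ ∀ b ∈ SetSP p, IsOVFIntegralAt ν (1 + f)⁻¹ b := by
  refine ⟨one_add_ne_zero_of_inCone hS hf, fun b hb Γ _ w ⟨_, O, hO⟩ hw => ?_⟩
  have hp : ∀ x ∈ Set.range fun i => algebraMap _ (RatFuncField K n) (p i), O.Pos x := by
    rintro _ ⟨i, rfl⟩
    exact hO.pos_of_isNear hK.1 hw (hb i)
  exact hO.valuation_inv_one_add_le_one (hf.pos hp)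
end

section
/- (Baer–Krull, special case) Let (L,μ) be a valued field with residue field ℓ, let ≤_ℓ be a linear order making ℓ an ordered field, and let s be a semi-section of (L,μ). Then the relation defined on nonzero x ∈ L by x >_L 0 ⟺ res(x/s(μ(x))) >_ℓ 0 is the positivity relation of a linear order ≤_L making L an ordered field; moreover ≤_L induces ≤_ℓ on the residue field; and finally, any linear order on L making L an ordered field which induces ≤_ℓ on ℓ is compatible with μ. -/
universe u v w

open MvPolynomial

/-! The sign of a nonzero `x` is the sign in `ℓ` of the residue of the unit `x / s (μ x)`.
By the semi-section property, the unit attached to `x * y` is the product of those attached to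
`x` and `y` times the square of a unit, so the sign is multiplicative and squares are positive;
adding a term of strictly larger valuation does not change the residue, which gives additivity.
Conversely, if an ordering inducing `≤_ℓ` had `0 < x < y` with `μ y < μ x`, then `y / x - 1`
would be a positive unit with residue `-1`. -/

namespace FieldOrdering

variable {L : Type*} [Field L] (O : FieldOrdering L)

theorem not_pos_neg_s6 {a : L} (ha : O.Pos a) : ¬O.Pos (-a) := by
  intro hna
  have h := O.mul_mem _ (O.mul_mem _ ha.1 _ hna.1) _ (O.square_mem a⁻¹)
  have h_eq : a * -a * (a⁻¹ * a⁻¹) = -1 := by field_simp [ha.2]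
  exact O.neg_one_not_mem (h_eq ▸ h)

theorem pos_or_pos_neg_s6 {a : L} (ha : a ≠ 0) : O.Pos a ∨ O.Pos (-a) :=
  (O.total a).imp (⟨·, ha⟩) (⟨·, neg_ne_zero.2 ha⟩)

theorem pos_add_s6 {a b : L} (ha : O.Pos a) (hb : O.Pos b) : O.Pos (a + b) := by
  refine ⟨O.add_mem _ ha.1 _ hb.1, fun h => O.not_pos_neg_s6 hb ?_⟩
  rwa [neg_eq_of_add_eq_zero_left h]

theorem pos_mul_s6 {a b : L} (ha : O.Pos a) (hb : O.Pos b) : O.Pos (a * b) :=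
  ⟨O.mul_mem _ ha.1 _ hb.1, mul_ne_zero ha.2 hb.2⟩

theorem pos_mul_self_s6 {a : L} (ha : a ≠ 0) : O.Pos (a * a) :=
  ⟨O.square_mem a, mul_ne_zero ha ha⟩

theorem pos_inv {a : L} (ha : O.Pos a) : O.Pos a⁻¹ := by
  have h_eq : a * (a⁻¹ * a⁻¹) = a⁻¹ := by field_simp [ha.2]
  exact h_eq ▸ O.pos_mul_s6 ha (O.pos_mul_self_s6 (inv_ne_zero ha.2))

def ofPos (Q : L → Prop) (add : ∀ x y, Q x → Q y → Q (x + y))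
    (mul : ∀ x y, Q x → Q y → Q (x * y)) (mul_self : ∀ x, x ≠ 0 → Q (x * x))
    (not_neg : ∀ x, Q x → ¬Q (-x)) (total : ∀ x, x ≠ 0 → Q x ∨ Q (-x)) :
    FieldOrdering L where
  P := {x | x = 0 ∨ Q x}
  add_mem := by
    rintro x (rfl | hx) y (rfl | hy)
    exacts [Or.inl (add_zero 0), Or.inr (by rwa [zero_add]), Or.inr (by rwa [add_zero]),
      Or.inr (add x y hx hy)]
  mul_mem := by
    rintro x (rfl | hx) y (rfl | hy)
    exacts [Or.inl (mul_zero 0), Or.inl (zero_mul y), Or.inl (mul_zero x),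
      Or.inr (mul x y hx hy)]
  square_mem x := (eq_or_ne x 0).imp (fun hx => by rw [hx, mul_zero]) (mul_self x)
  neg_one_not_mem := by
    rintro (h | h)
    · exact neg_ne_zero.2 one_ne_zero h
    · exact not_neg 1 (by simpa using mul_self 1 one_ne_zero) h
  total x := by
    obtain rfl | hx := eq_or_ne x 0
    · exact Or.inl (Or.inl rfl)
    · exact (total x hx).imp Or.inr Or.inr

theorem pos_ofPos_iff {Q : L → Prop} {add mul mul_self} {not_neg : ∀ x, Q x → ¬Q (-x)}
    {total} {x : L} : (ofPos Q add mul mul_self not_neg total).Pos x ↔ Q x := by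
  have hQ0 : ¬Q 0 := fun h => not_neg 0 h (by rwa [neg_zero])
  refine ⟨fun ⟨hx, hx0⟩ => hx.resolve_left hx0, fun hx => ⟨Or.inr hx, ?_⟩⟩
  rintro rfl
  exact hQ0 hx

end FieldOrdering

section ResPos

variable {L : Type*} [Field L] {Γ : Type*} [LinearOrderedCommGroupWithZero Γ]
  {μ : Valuation L Γ} {Oℓ : FieldOrdering (IsLocalRing.ResidueField μ.valuationSubring)}
  {a b : L}

theorem Valuation.residue_eq_zero_iff (u : μ.valuationSubring) :
    IsLocalRing.residue μ.valuationSubring u = 0 ↔ μ (u : L) < 1 := by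
  rw [IsLocalRing.residue_eq_zero_iff, ValuationSubring.valuation_lt_one_iff]
  exact μ.isEquiv_valuation_valuationSubring.lt_one_iff_lt_one.symm

theorem Valuation.residue_ne_zero {a : L} (ha : μ a = 1) :
    IsLocalRing.residue μ.valuationSubring ⟨a, ha.le⟩ ≠ 0 := by
  rw [Ne, Valuation.residue_eq_zero_iff]
  exact not_lt.2 ha.ge

theorem ResPos.valuation_eq_one (ha : ResPos μ Oℓ a) : μ a = 1 := by
  obtain ⟨u, rfl, hu⟩ := ha
  exact le_antisymm u.2 (not_lt.1 ((Valuation.residue_eq_zero_iff u).not.1 hu.2))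

theorem ResPos.ne_zero (ha : ResPos μ Oℓ a) : a ≠ 0 :=
  μ.ne_zero_iff.1 (ha.valuation_eq_one ▸ one_ne_zero)

theorem ResPos.mul (ha : ResPos μ Oℓ a) (hb : ResPos μ Oℓ b) : ResPos μ Oℓ (a * b) := by
  obtain ⟨u, rfl, hu⟩ := ha
  obtain ⟨v, rfl, hv⟩ := hb
  exact ⟨u * v, rfl, by rw [map_mul]; exact Oℓ.pos_mul_s6 hu hv⟩

theorem ResPos.add (ha : ResPos μ Oℓ a) (hb : ResPos μ Oℓ b) : ResPos μ Oℓ (a + b) := by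
  obtain ⟨u, rfl, hu⟩ := ha
  obtain ⟨v, rfl, hv⟩ := hb
  exact ⟨u + v, rfl, by rw [map_add]; exact Oℓ.pos_add_s6 hu hv⟩

theorem ResPos.add_of_valuation_lt_one (ha : ResPos μ Oℓ a) (hb : μ b < 1) :
    ResPos μ Oℓ (a + b) := by
  obtain ⟨u, rfl, hu⟩ := ha
  have hres : IsLocalRing.residue μ.valuationSubring ⟨b, hb.le⟩ = 0 :=
    (Valuation.residue_eq_zero_iff _).2 hb
  exact ⟨u + ⟨b, hb.le⟩, rfl, by rwa [map_add, hres, add_zero]⟩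

theorem resPos_mul_self (ha : μ a = 1) : ResPos μ Oℓ (a * a) :=
  ⟨⟨a, ha.le⟩ * ⟨a, ha.le⟩, rfl, by
    rw [map_mul]; exact Oℓ.pos_mul_self_s6 (Valuation.residue_ne_zero ha)⟩

theorem ResPos.inv (ha : ResPos μ Oℓ a) : ResPos μ Oℓ a⁻¹ := by
  have h_eq : a * (a⁻¹ * a⁻¹) = a⁻¹ := by field_simp [ha.ne_zero]
  exact h_eq ▸ ha.mul (resPos_mul_self (by rw [map_inv₀, ha.valuation_eq_one, inv_one]))

theorem ResPos.not_neg (ha : ResPos μ Oℓ a) : ¬ResPos μ Oℓ (-a) := by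
  obtain ⟨u, rfl, hu⟩ := ha
  rintro ⟨v, hv, hv_pos⟩
  obtain rfl : v = -u := Subtype.ext hv
  rw [map_neg] at hv_pos
  exact Oℓ.not_pos_neg_s6 hu hv_pos

theorem resPos_or_resPos_neg (ha : μ a = 1) : ResPos μ Oℓ a ∨ ResPos μ Oℓ (-a) :=
  (Oℓ.pos_or_pos_neg_s6 (Valuation.residue_ne_zero ha)).imp (⟨_, rfl, ·⟩)
    fun h => ⟨-⟨a, ha.le⟩, rfl, by rwa [map_neg]⟩

theorem OrderingInduces.isCompatible {OL : FieldOrdering L} (h : OrderingInduces μ OL Oℓ) :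
    OL.IsCompatible μ := by
  intro x y hx hyx
  by_contra! hlt
  have hx0 : μ x ≠ 0 := μ.ne_zero_iff.2 hx.2
  have hq : μ (y / x) < 1 := by
    rwa [map_div₀, div_lt_one₀ (zero_lt_iff.2 hx0)]
  have hq1 : μ (y / x - 1) = 1 := by
    rw [μ.map_sub_eq_of_lt_right (by rwa [map_one]), map_one]
  have hpos : OL.Pos (y / x - 1) := by
    have h_eq : y / x - 1 = (y - x) * x⁻¹ := by rw [← div_eq_mul_inv, sub_div, div_self hx.2]
    exact h_eq ▸ OL.pos_mul_s6 hyx (OL.pos_inv hx)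
  have hres : ResPos μ Oℓ (y / x - 1) := ⟨⟨_, hq1.le⟩, rfl, h _ hq1 hpos⟩
  have hneg_one : ResPos μ Oℓ (-1) := by
    have h_eq : y / x - 1 + -(y / x) = -1 := by ring
    exact h_eq ▸ hres.add_of_valuation_lt_one (by rwa [Valuation.map_neg])
  exact hneg_one.not_neg (by simpa using resPos_mul_self (μ := μ) (Oℓ := Oℓ) (map_one μ))

end ResPos

namespace IsSemiSection

variable {L : Type*} [Field L] {Γ : Type*} [LinearOrderedCommGroupWithZero Γ]
  {μ : Valuation L Γ} {Oℓ : FieldOrdering (IsLocalRing.ResidueField μ.valuationSubring)}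
  {s : Γ → L} {x y : L}

theorem valuation_div_self (hs : IsSemiSection μ s) (hx : x ≠ 0) : μ (x / s (μ x)) = 1 := by
  have hx' := μ.ne_zero_iff.2 hx
  rw [map_div₀, hs.1 _ hx', div_self hx']

theorem exists_div_mul_div (hs : IsSemiSection μ s) (hx : x ≠ 0) (hy : y ≠ 0) :
    ∃ d : L, μ d = 1 ∧ x * y / s (μ (x * y)) = x / s (μ x) * (y / s (μ y)) * (d * d) := by
  have hx' := μ.ne_zero_iff.2 hx
  have hy' := μ.ne_zero_iff.2 hy
  obtain ⟨c, -, hc⟩ := hs.2 _ _ hx' hy'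
  have hμc : μ c ^ 2 = 1 := by
    have h := congrArg μ hc
    rw [hs.1 _ (mul_ne_zero hx' hy'), map_mul, map_mul, map_mul, hs.1 _ hx', hs.1 _ hy'] at h
    rw [sq]
    exact (mul_eq_left₀ (mul_ne_zero hx' hy')).1 h.symm
  have hsx : s (μ x) ≠ 0 := fun h => hx' (by rw [← hs.1 _ hx', h, map_zero])
  have hsy : s (μ y) ≠ 0 := fun h => hy' (by rw [← hs.1 _ hy', h, map_zero])
  refine ⟨c⁻¹, ?_, ?_⟩
  · rw [map_inv₀, (pow_eq_one_iff_of_nonneg zero_le two_ne_zero).1 hμc, inv_one]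
  · rw [map_mul, hc]
    field_simp

theorem resPos_mul (hs : IsSemiSection μ s) (hx : ResPos μ Oℓ (x / s (μ x)))
    (hy : ResPos μ Oℓ (y / s (μ y))) : ResPos μ Oℓ (x * y / s (μ (x * y))) := by
  obtain ⟨d, hd, h_eq⟩ := hs.exists_div_mul_div (div_ne_zero_iff.1 hx.ne_zero).1
    (div_ne_zero_iff.1 hy.ne_zero).1
  rw [h_eq]
  exact (hx.mul hy).mul (resPos_mul_self hd)

theorem resPos_mul_self (hs : IsSemiSection μ s) (hx : x ≠ 0) :
    ResPos μ Oℓ (x * x / s (μ (x * x))) := by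
  obtain ⟨d, hd, h_eq⟩ := hs.exists_div_mul_div hx hx
  rw [h_eq, mul_mul_mul_comm]
  exact _root_.resPos_mul_self (by rw [map_mul, hs.valuation_div_self hx, hd, one_mul])

theorem resPos_add (hs : IsSemiSection μ s) (hx : ResPos μ Oℓ (x / s (μ x)))
    (hy : ResPos μ Oℓ (y / s (μ y))) : ResPos μ Oℓ ((x + y) / s (μ (x + y))) := by
  wlog hle : μ x ≤ μ y generalizing x y
  · rw [add_comm]
    exact this hy hx (le_of_not_ge hle)
  have hy' := μ.ne_zero_iff.2 (div_ne_zero_iff.1 hy.ne_zero).1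
  have hsum : ResPos μ Oℓ ((x + y) / s (μ y)) := by
    rw [add_div, add_comm]
    rcases hle.lt_or_eq with hlt | heq
    · refine hy.add_of_valuation_lt_one ?_
      rwa [map_div₀, hs.1 _ hy', div_lt_one₀ (zero_lt_iff.2 hy')]
    · rw [heq] at hx
      exact hy.add hx
  have hμ : μ (x + y) = μ y := by
    have h := hsum.valuation_eq_one
    rwa [map_div₀, hs.1 _ hy', div_eq_one_iff_eq hy'] at h
  rwa [hμ]

theorem resPos_of_valuation_eq_one (hs : IsSemiSection μ s) {u : L} (hu : μ u = 1)
    (h : ResPos μ Oℓ (u / s (μ u))) : ResPos μ Oℓ u := by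
  have h1 : ResPos μ Oℓ (1 / s 1) := by
    simpa only [mul_one, map_one] using hs.resPos_mul_self (Oℓ := Oℓ) one_ne_zero
  rw [hu] at h
  have hs1 : s 1 ≠ 0 := (div_ne_zero_iff.1 h.ne_zero).2
  have h_eq : u / s 1 * (1 / s 1)⁻¹ = u := by field_simp
  exact h_eq ▸ h.mul h1.inv

def fieldOrdering (hs : IsSemiSection μ s)
    (Oℓ : FieldOrdering (IsLocalRing.ResidueField μ.valuationSubring)) : FieldOrdering L :=
  FieldOrdering.ofPos (fun x => ResPos μ Oℓ (x / s (μ x)))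
    (fun _ _ => hs.resPos_add) (fun _ _ => hs.resPos_mul) (fun _ => hs.resPos_mul_self)
    (fun _ hx => by rw [Valuation.map_neg, neg_div]; exact hx.not_neg)
    (fun _ hx => by
      rw [Valuation.map_neg, neg_div]; exact resPos_or_resPos_neg (hs.valuation_div_self hx))

theorem pos_fieldOrdering_iff (hs : IsSemiSection μ s) :
    (hs.fieldOrdering Oℓ).Pos x ↔ ResPos μ Oℓ (x / s (μ x)) :=
  FieldOrdering.pos_ofPos_iff

theorem fieldOrdering_induces (hs : IsSemiSection μ s) :
    OrderingInduces μ (hs.fieldOrdering Oℓ) Oℓ := by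
  intro u hu hpos
  obtain ⟨v, hv, hv_pos⟩ := hs.resPos_of_valuation_eq_one hu (hs.pos_fieldOrdering_iff.1 hpos)
  obtain rfl := Subtype.ext hv
  exact hv_pos

end IsSemiSection

theorem baer_krull_general {L : Type u} [Field L] {Γ : Type v} [LinearOrderedCommGroupWithZero Γ]
    (μ : Valuation L Γ)
    (Oℓ : FieldOrdering (IsLocalRing.ResidueField μ.valuationSubring))
    (s : Γ → L) (hs : IsSemiSection μ s) :
    (∃ OL : FieldOrdering L,
      (∀ x : L, x ≠ 0 → (OL.Pos x ↔ ResPos μ Oℓ (x / s (μ x)))) ∧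
      OrderingInduces μ OL Oℓ) ∧
    ∀ OL : FieldOrdering L, OrderingInduces μ OL Oℓ → OL.IsCompatible μ :=
  ⟨⟨hs.fieldOrdering Oℓ, fun _ _ => hs.pos_fieldOrdering_iff, hs.fieldOrdering_induces⟩,
    fun _ h => h.isCompatible⟩

/-- **Baer–Krull, special case.** Given an ordering of the residue field and a
semi-section `s`, the relation `x >_L 0 ↔ res (x / s (μ x)) >_ℓ 0` (for nonzero `x`) is the
positivity relation of a field ordering of `L`; this ordering induces the given ordering of the
residue field; and any field ordering of `L` inducing the given residue ordering is compatible
with `μ`. -/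
theorem baer_krull {L : Type u} [Field L] {Γ : Type v} [LinearOrderedCommGroupWithZero Γ]
    (μ : Valuation L Γ) (hsurj : ∀ γ : Γ, γ ≠ 0 → ∃ x : L, μ x = γ)
    (Oℓ : FieldOrdering (IsLocalRing.ResidueField μ.valuationSubring))
    (s : Γ → L) (hs : IsSemiSection μ s) :
    (∃ OL : FieldOrdering L,
      (∀ x : L, x ≠ 0 → (OL.Pos x ↔ ResPos μ Oℓ (x / s (μ x)))) ∧
      OrderingInduces μ OL Oℓ) ∧
    ∀ OL : FieldOrdering L, OrderingInduces μ OL Oℓ → OL.IsCompatible μ :=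
  baer_krull_general μ Oℓ s hs
end

section
/- Let (L,μ) be a valued field with value group Γ_L, and let p₁,…,p_t ∈ L× with γ_i = μ(p_i) such that the images of γ₁,…,γ_t in Γ_L/2Γ_L are linearly independent over ℤ/2ℤ. Then there exists a semi-section s of (L,μ) such that s(γ_i)/p_i is a square in L× for every 1 ≤ i ≤ t. -/
universe u v w

open MvPolynomial

/-!
The valuation induces a surjective `ZMod 2`-linear map `φ : L×/L×² → Γ×/Γ×²`, and by hypothesis
the classes of the `μ pᵢ` are linearly independent, so `φ` has a linear section `σ` sending the
class of `μ pᵢ` to the class of `pᵢ`. Each class `σ [γ]` contains an element of value exactly `γ`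
(correct any representative by the square of an element whose value is the square root of the
discrepancy); choosing such elements gives `s`, and linearity of `σ` makes
`s (γ₁ γ₂) / (s γ₁ s γ₂)` a square.
-/

theorem linearIndependent_zmod_two_iff {ι M : Type*} [AddCommGroup M] [Module (ZMod 2) M]
    (v : ι → M) : LinearIndependent (ZMod 2) v ↔ ∀ S : Finset ι, ∑ i ∈ S, v i = 0 → S = ∅ := by
  constructor
  · intro hv S hS
    refine Finset.eq_empty_of_forall_notMem fun i hi => one_ne_zero (α := ZMod 2) ?_
    exact linearIndependent_iff'.1 hv S (fun _ => 1) (by simpa using hS) i hi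
  · intro hv
    refine linearIndependent_iff'.2 fun s g hg i hi => ?_
    have hsupp : ∑ j ∈ s with g j ≠ 0, v j = 0 := by
      rw [← hg, ← Finset.sum_filter_of_ne fun j _ hj => left_ne_zero_of_smul hj]
      refine Finset.sum_congr rfl fun j hj => ?_
      have hj1 : g j = 1 :=
        (by decide : ∀ a : ZMod 2, a ≠ 0 → a = 1) _ (Finset.mem_filter.1 hj).2
      rw [hj1, one_smul]
    by_contra hgi
    have := hv _ hsupp
    exact Finset.notMem_empty i (this ▸ Finset.mem_filter.2 ⟨hi, hgi⟩)

theorem LinearMap.exists_rightInverse_apply_eq {K V W ι : Type*} [Field K] [AddCommGroup V]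
    [Module K V] [AddCommGroup W] [Module K W] (f : V →ₗ[K] W) (hf : Function.Surjective f)
    {w : ι → W} (hw : LinearIndependent K w) (v : ι → V) (hv : ∀ i, f (v i) = w i) :
    ∃ σ : W →ₗ[K] V, f ∘ₗ σ = LinearMap.id ∧ ∀ i, σ (w i) = v i := by
  obtain ⟨σ₀, hσ₀⟩ := f.exists_rightInverse_of_surjective (LinearMap.range_eq_top.2 hf)
  obtain ⟨τ, hτ⟩ := LinearMap.exists_extend ((Module.Basis.span hw).constr K v)
  have hτw : ∀ i, τ (w i) = v i := fun i => by
    have := congr($hτ (Module.Basis.span hw i))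
    rwa [Module.Basis.constr_basis, LinearMap.comp_apply, Submodule.subtype_apply,
      Module.Basis.span_apply] at this
  -- `σ₀ ∘ (id - f ∘ τ)` corrects `τ` into a right inverse without changing it on the `w i`.
  refine ⟨τ + σ₀ ∘ₗ (LinearMap.id - f ∘ₗ τ), ?_, fun i => ?_⟩
  · rw [LinearMap.comp_add, ← LinearMap.comp_assoc, hσ₀, LinearMap.id_comp]
    abel
  · simp [hτw, hv]

abbrev SquareClass (G : Type*) [CommGroup G] : Type _ := Additive (G ⧸ Subgroup.square G)

namespace SquareClass

variable {G H : Type*} [CommGroup G] [CommGroup H]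

def mk (g : G) : SquareClass G := Additive.ofMul (QuotientGroup.mk g)

theorem mk_surjective : Function.Surjective (mk (G := G)) := fun x =>
  (QuotientGroup.mk_surjective (Additive.toMul x)).imp fun _ hg => congrArg Additive.ofMul hg

theorem mk_mul (a b : G) : mk (a * b) = mk a + mk b := rfl

theorem mk_prod {ι : Type*} (S : Finset ι) (a : ι → G) :
    mk (∏ i ∈ S, a i) = ∑ i ∈ S, mk (a i) := by
  simp only [mk, QuotientGroup.mk_prod, ofMul_prod]

theorem mk_eq_mk_iff {a b : G} : mk a = mk b ↔ IsSquare (a⁻¹ * b) :=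
  Additive.ofMul.injective.eq_iff.trans QuotientGroup.eq

theorem mk_eq_zero_iff {a : G} : mk a = 0 ↔ IsSquare a :=
  Additive.ofMul.injective.eq_iff.trans (QuotientGroup.eq_one_iff a)

instance : Module (ZMod 2) (SquareClass G) :=
  AddCommGroup.zmodModule fun x => by
    obtain ⟨g, rfl⟩ := mk_surjective x
    rw [two_nsmul, ← mk_mul, mk_eq_zero_iff]
    exact ⟨g, rfl⟩

def map (φ : G →* H) : SquareClass G →ₗ[ZMod 2] SquareClass H :=
  AddMonoidHom.toZModLinearMap 2 <| MonoidHom.toAdditive <|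
    QuotientGroup.map _ _ φ fun _ ⟨r, hr⟩ => ⟨φ r, by simp [hr]⟩

theorem map_mk (φ : G →* H) (g : G) : map φ (mk g) = mk (φ g) := rfl

theorem map_surjective {φ : G →* H} (hφ : Function.Surjective φ) :
    Function.Surjective (map φ) := fun y => by
  obtain ⟨h, rfl⟩ := mk_surjective y
  obtain ⟨g, rfl⟩ := hφ h
  exact ⟨mk g, map_mk φ g⟩

theorem exists_apply_eq_and_mk_eq {φ : G →* H} (hφ : Function.Surjective φ)
    {c : SquareClass G} {h : H} (hc : map φ c = mk h) : ∃ g, φ g = h ∧ mk g = c := by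
  obtain ⟨g₀, rfl⟩ := mk_surjective c
  obtain ⟨d, hd⟩ := mk_eq_mk_iff.1 ((map_mk φ g₀).symm.trans hc)
  obtain ⟨e, rfl⟩ := hφ d
  refine ⟨g₀ * (e * e), ?_, ?_⟩
  · rw [map_mul, map_mul, ← hd, mul_inv_cancel_left]
  · rw [mk_mul, mk_eq_zero_iff.2 ⟨e, rfl⟩, add_zero]

theorem exists_val_eq_mul_mul_self {M₀ : Type*} [CommMonoidWithZero M₀]
    [Nontrivial M₀] {a b : M₀ˣ} (h : mk a = mk b) :
    ∃ c : M₀, c ≠ 0 ∧ (b : M₀) = a * (c * c) := by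
  obtain ⟨c, hc⟩ := mk_eq_mk_iff.1 h
  exact ⟨c, c.ne_zero, by rw [← Units.val_mul, ← Units.val_mul, ← hc, mul_inv_cancel_left]⟩

end SquareClass

theorem MonoidHom.exists_semisection {G H ι : Type*} [CommGroup G] [CommGroup H]
    (φ : G →* H) (hφ : Function.Surjective φ) (p : ι → G)
    (hp : LinearIndependent (ZMod 2) fun i => SquareClass.mk (φ (p i))) :
    ∃ s : H → G, (∀ h, φ (s h) = h) ∧
      (∀ a b, SquareClass.mk (s (a * b)) = SquareClass.mk (s a * s b)) ∧
      ∀ i, SquareClass.mk (s (φ (p i))) = SquareClass.mk (p i) := by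
  obtain ⟨σ, hσ, hσp⟩ := (SquareClass.map φ).exists_rightInverse_apply_eq
    (SquareClass.map_surjective hφ) hp _ fun i => SquareClass.map_mk φ (p i)
  have hlift (h : H) : ∃ g, φ g = h ∧ SquareClass.mk g = σ (SquareClass.mk h) :=
    SquareClass.exists_apply_eq_and_mk_eq hφ (LinearMap.congr_fun hσ (SquareClass.mk h))
  choose s hsφ hsσ using hlift
  refine ⟨s, hsφ, fun a b => ?_, fun i => (hsσ _).trans (hσp i)⟩
  rw [hsσ, SquareClass.mk_mul, SquareClass.mk_mul, map_add, hsσ, hsσ]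

theorem IsSemiSection.of_units {L Γ : Type*} [Field L] [LinearOrderedCommGroupWithZero Γ]
    (μ : Valuation L Γ) (s : Γˣ → Lˣ) (hs : ∀ γ, Units.map (μ : L →* Γ) (s γ) = γ)
    (hmul : ∀ a b, SquareClass.mk (s (a * b)) = SquareClass.mk (s a * s b)) :
    IsSemiSection μ fun γ => if h : γ = 0 then 1 else (s (Units.mk0 γ h) : L) := by
  refine ⟨fun γ h => ?_, fun a b ha hb => ?_⟩
  · simpa [h] using congr(($(hs (Units.mk0 γ h)) : Γ))
  · obtain ⟨c, hc0, hc⟩ :=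
      SquareClass.exists_val_eq_mul_mul_self (hmul (.mk0 a ha) (.mk0 b hb)).symm
    exact ⟨c, hc0, by simpa [ha, hb, ← Units.mk0_mul] using hc⟩

/-- If `p₁,…,p_t ∈ L×` have values independent modulo `2Γ_L`, there is a
semi-section `s` of `(L,μ)` with `s (μ (p i)) / p i` a square for every `i`. -/
theorem exists_semisection {L : Type u} [Field L] {Γ : Type v}
    [LinearOrderedCommGroupWithZero Γ] (μ : Valuation L Γ)
    (hsurj : ∀ γ : Γ, γ ≠ 0 → ∃ x : L, μ x = γ)
    {t : ℕ} (p : Fin t → L) (hp : ∀ i, p i ≠ 0)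
    (hindep : ∀ S : Finset (Fin t), (∃ δ : Γ, (∏ i ∈ S, μ (p i)) = δ * δ) → S = ∅) :
    ∃ s : Γ → L, IsSemiSection μ s ∧
      ∀ i, ∃ c : L, c ≠ 0 ∧ s (μ (p i)) = p i * (c * c) := by
  set φ : Lˣ →* Γˣ := Units.map (μ : L →* Γ)
  have hφ : Function.Surjective φ := fun γ => by
    obtain ⟨x, hx⟩ := hsurj γ γ.ne_zero
    have hx0 : x ≠ 0 := by rintro rfl; exact γ.ne_zero (by simpa using hx.symm)
    exact ⟨Units.mk0 x hx0, Units.ext hx⟩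
  have hφp : LinearIndependent (ZMod 2) fun i => SquareClass.mk (φ (.mk0 (p i) (hp i))) := by
    refine (linearIndependent_zmod_two_iff _).2 fun S hS => hindep S ?_
    obtain ⟨δ, hδ⟩ := SquareClass.mk_eq_zero_iff.1 ((SquareClass.mk_prod S _).trans hS)
    exact ⟨δ, by simpa [φ] using congr(($hδ : Γ))⟩
  obtain ⟨s, hsφ, hsmul, hsp⟩ := φ.exists_semisection hφ _ hφp
  refine ⟨_, IsSemiSection.of_units μ s hsφ hsmul, fun i => ?_⟩
  obtain ⟨c, hc0, hc⟩ := SquareClass.exists_val_eq_mul_mul_self (hsp i).symm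
  have hμp : μ (p i) ≠ 0 := μ.ne_zero_iff.2 (hp i)
  refine ⟨c, hc0, ?_⟩
  rwa [dif_neg hμp, show Units.mk0 _ hμp = φ (.mk0 (p i) (hp i)) from Units.ext rfl]
end
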